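/- The dual diamond norm of a cq-map satisfies ‖φ_A^{cq}‖^⋄ = inf_{σ ∈ S(H)} max_i ‖σ^{-1/2} A_i σ^{-1/2}‖, where the infimum is over faithful states σ whose support contains the supports of all A_i. -/

import Mathlib

open scoped Matrix Kronecker ComplexOrder Matrix.Norms.L2Operator

noncomputable section

/-- The square root of a positive semidefinite matrix, as `Matrix.PosSemidef.sqrt` was
defined in the older Mathlib (removed since). -/
def Matrix.PosSemidef.sqrt {n : Type} [Fintype n] [DecidableEq n] {A : Matrix n n ℂ}
    (hA : A.PosSemidef) : Matrix n n ℂ :=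
  hA.1.eigenvectorUnitary.1 * Matrix.diagonal ((↑) ∘ Real.sqrt ∘ hA.1.eigenvalues) *
    (star hA.1.eigenvectorUnitary : Matrix n n ℂ)

/-- Square complex matrices indexed by `ι`. -/
abbrev Mat (ι : Type) [Fintype ι] [DecidableEq ι] : Type := Matrix ι ι ℂ

/-- Linear maps between matrix algebras. -/
abbrev MatMap (ι κ : Type) [Fintype ι] [DecidableEq ι] [Fintype κ] [DecidableEq κ] : Type :=
  Mat ι →ₗ[ℂ] Mat κ

variable {ι κ μ ν : Type} [Fintype ι] [DecidableEq ι] [Fintype κ] [DecidableEq κ]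
  [Fintype μ] [DecidableEq μ] [Fintype ν] [DecidableEq ν]

/-- `φ ⊗ id_τ`, the amplification of `φ` with the identity on `Mat τ`. -/
def tensorId (φ : MatMap ι κ) (τ : Type) [Fintype τ] [DecidableEq τ] :
    Matrix (ι × τ) (ι × τ) ℂ →ₗ[ℂ] Matrix (κ × τ) (κ × τ) ℂ where
  toFun X := Matrix.of fun p q => φ (Matrix.of fun i j => X (i, p.2) (j, q.2)) p.1 q.1
  map_add' X Y := by
    funext p q
    show φ (Matrix.of fun i j => (X + Y) (i, p.2) (j, q.2)) p.1 q.1 = _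
    rw [show (Matrix.of fun i j => (X + Y) (i, p.2) (j, q.2))
        = (Matrix.of fun i j => X (i, p.2) (j, q.2))
          + (Matrix.of fun i j => Y (i, p.2) (j, q.2)) from rfl, map_add]
    rfl
  map_smul' c X := by
    funext p q
    show φ (Matrix.of fun i j => (c • X) (i, p.2) (j, q.2)) p.1 q.1 = _
    rw [show (Matrix.of fun i j => (c • X) (i, p.2) (j, q.2))
        = c • (Matrix.of fun i j => X (i, p.2) (j, q.2)) from rfl, map_smul]
    rfl

/-- `φ` is Hermitian-preserving. -/
def IsHermitianPreserving (φ : MatMap ι κ) : Prop := ∀ X, (φ X)ᴴ = φ Xᴴ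

/-- `φ` is completely positive: all amplifications by finite-dimensional identities
preserve positive semidefiniteness. -/
def IsCP (φ : MatMap ι κ) : Prop :=
  ∀ (l : ℕ) (X : Matrix (ι × Fin l) (ι × Fin l) ℂ), X.PosSemidef →
    (tensorId φ (Fin l) X).PosSemidef

/-- `φ` is trace-preserving. -/
def IsTP (φ : MatMap ι κ) : Prop := ∀ X, (φ X).trace = X.trace

/-- A channel is a completely positive trace-preserving map. -/
def IsChannel (φ : MatMap ι κ) : Prop := IsCP φ ∧ IsTP φ

/-- Density operator. -/
def IsState (σ : Mat ι) : Prop := σ.PosSemidef ∧ σ.trace = 1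

/-- The Choi matrix of `φ`. -/
def choiMatrix (φ : MatMap ι κ) : Matrix (κ × ι) (κ × ι) ℂ :=
  Matrix.of fun p q => φ (Matrix.single p.2 q.2 1) p.1 q.1

/-- The tracelike functional `s`. -/
def sFun (φ : MatMap ι ι) : ℂ :=
  ∑ i, ∑ j, φ (Matrix.single i j 1) i j

/-- The pairing `⟨ψ, φ⟩ = s(ψ ∘ φ)`. -/
def pairing (ψ : MatMap κ ι) (φ : MatMap ι κ) : ℂ := sFun (ψ ∘ₗ φ)

/-- The erasure map `A ↦ Tr[A] σ`. -/
def erasure (σ : Mat κ) : MatMap ι κ :=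
  (Matrix.traceLinearMap ι ℂ ℂ).smulRight σ

/-- The diamond norm, via its order-theoretic characterization. -/
noncomputable def diamondNorm (φ : MatMap ι κ) : ℝ :=
  sInf {r : ℝ | 0 < r ∧ ∃ α : MatMap ι κ, IsChannel α ∧
    IsCP ((r : ℂ) • α - φ) ∧ IsCP ((r : ℂ) • α + φ)}

/-- The dual diamond norm, via its order-theoretic characterization. -/
noncomputable def dualDiamondNorm (ψ : MatMap ι κ) : ℝ :=
  sInf {r : ℝ | 0 < r ∧ ∃ σ : Mat κ, IsState σ ∧
    IsCP ((r : ℂ) • erasure (ι := ι) σ - ψ) ∧ IsCP ((r : ℂ) • erasure (ι := ι) σ + ψ)}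

/-- The Hilbert–Schmidt (trace-duality) adjoint of `ψ`. -/
def adjointMap (ψ : MatMap ι κ) : MatMap κ ι where
  toFun A := Matrix.of fun i j => (A * ψ (Matrix.single j i 1)).trace
  map_add' A B := by funext i j; simp [Matrix.add_mul]
  map_smul' c A := by funext i j; simp [Matrix.smul_mul]

/-- The cq-map associated with a family of operators. -/
def cqMap {n : ℕ} (A : Fin n → Mat ι) : MatMap (Fin n) ι where
  toFun X := ∑ i, X i i • A i
  map_add' X Y := by simp [Matrix.add_apply, add_smul, Finset.sum_add_distrib]
  map_smul' c X := by simp [Matrix.smul_apply, smul_smul, Finset.smul_sum]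

/-- The qc-map associated with a family of operators. -/
def qcMap {n : ℕ} (B : Fin n → Mat ι) : MatMap ι (Fin n) where
  toFun X := Matrix.diagonal fun i => (X * B i).trace
  map_add' X Y := by
    funext i j
    by_cases h : i = j <;>
      simp [Matrix.add_mul, Matrix.diagonal, Matrix.of_apply, h]
  map_smul' c X := by
    funext i j
    by_cases h : i = j <;>
      simp [Matrix.smul_mul, Matrix.diagonal, Matrix.of_apply, h]

/-- A POVM with `n` outcomes. -/
def IsPOVM {n : ℕ} (M : Fin n → Mat ι) : Prop :=
  (∀ i, (M i).PosSemidef) ∧ ∑ i, M i = 1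

/-- An ensemble: probabilities with states. -/
def IsEnsemble {n : ℕ} (lam : Fin n → ℝ) (σ : Fin n → Mat ι) : Prop :=
  (∀ i, 0 < lam i) ∧ (∑ i, lam i = 1) ∧ ∀ i, IsState (σ i)

/-- Optimal success probability of guessing among the states of an ensemble. -/
noncomputable def pSucc {n : ℕ} (lam : Fin n → ℝ) (σ : Fin n → Mat ι) : ℝ :=
  sSup {r : ℝ | ∃ M : Fin n → Mat ι, IsPOVM M ∧
    r = ∑ i, lam i * ((M i * σ i).trace).re}

/-- Trace norm `‖A‖₁ = Tr √(AᴴA)`. -/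
noncomputable def traceNorm (A : Mat ι) : ℝ :=
  ((Matrix.posSemidef_conjTranspose_mul_self A).sqrt).trace.re

/-- Le Cam deficiency of `Φ` with respect to `Ψ`. -/
noncomputable def deficiency (Φ : MatMap ι κ) (Ψ : MatMap ι μ) : ℝ :=
  sInf {r : ℝ | ∃ α : MatMap μ κ, IsChannel α ∧ r = diamondNorm (Φ - α ∘ₗ Ψ)}

/-!
Writing `r • erasure σ ∓ cqMap A` as the cq-map of the family `r • σ ∓ A i`, and using that a
cq-map is completely positive iff each operator of its family is positive semidefinite, the dual
diamond norm becomes the infimum of the `r > 0` admitting a state `σ` with `-r σ ≤ A i ≤ r σ` for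
all `i`. For faithful `σ`, conjugation by `σ^{-1/2}` turns this into
`‖σ^{-1/2} A i σ^{-1/2}‖ ≤ r`. A state that is not faithful is replaced by the faithful state
`(r σ + (δ / k) 1) / (r + δ)`, which costs only `δ` in `r`, so the two infima agree.
-/

open scoped MatrixOrder

lemma csInf_le_csInf_of_forall_exists_le_add {S T : Set ℝ} (hS : BddBelow S)
    (hT : T.Nonempty) (h : ∀ t ∈ T, ∀ ε > 0, ∃ s ∈ S, s ≤ t + ε) : sInf S ≤ sInf T :=
  le_csInf hT fun t ht => le_of_forall_pos_le_add fun ε hε =>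
    let ⟨_, hs, hst⟩ := h t ht ε hε
    (csInf_le hS hs).trans hst

lemma csInf_eq_csInf_of_forall_exists_le_add {S T : Set ℝ} (hS : BddBelow S) (hT : BddBelow T)
    (hST : ∀ s ∈ S, ∀ ε > 0, ∃ t ∈ T, t ≤ s + ε)
    (hTS : ∀ t ∈ T, ∀ ε > 0, ∃ s ∈ S, s ≤ t + ε) :
    sInf S = sInf T := by
  rcases S.eq_empty_or_nonempty with rfl | ⟨s, hs⟩
  · rcases T.eq_empty_or_nonempty with rfl | ⟨t, ht⟩
    · rfl
    · obtain ⟨s, hs, -⟩ := hTS t ht 1 one_pos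
      exact (Set.notMem_empty s hs).elim
  · obtain ⟨t, ht, -⟩ := hST s hs 1 one_pos
    exact le_antisymm (csInf_le_csInf_of_forall_exists_le_add hS ⟨t, ht⟩ hTS)
      (csInf_le_csInf_of_forall_exists_le_add hT ⟨s, hs⟩ hST)

lemma IsSelfAdjoint.norm_le_iff_neg_le_and_le {A : Type*} [CStarAlgebra A] [PartialOrder A]
    [StarOrderedRing A] {a : A} (ha : IsSelfAdjoint a) {r : ℝ} (hr : 0 ≤ r) :
    ‖a‖ ≤ r ↔ -algebraMap ℝ A r ≤ a ∧ a ≤ algebraMap ℝ A r := by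
  refine ⟨fun h => ⟨?_, ?_⟩, fun ⟨h₁, h₂⟩ => ?_⟩
  · exact (neg_le_neg (algebraMap_mono A h)).trans ha.neg_algebraMap_norm_le_self
  · exact ha.le_algebraMap_norm_self.trans (algebraMap_mono A h)
  · obtain h | _ := subsingleton_or_nontrivial A
    · simp [Subsingleton.elim a 0, hr]
    rw [← map_neg, algebraMap_le_iff_le_spectrum] at h₁
    rw [le_algebraMap_iff_spectrum_le] at h₂
    rcases CStarAlgebra.norm_or_neg_norm_mem_spectrum ha with h | h
    · exact h₂ _ h
    · linarith [h₁ _ h]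

lemma IsUnit.star_left_conjugate_le_conjugate_iff {R : Type*} [Ring R] [StarRing R]
    [PartialOrder R] [StarOrderedRing R] {u a b : R} (hu : IsUnit u) :
    star u * a * u ≤ star u * b * u ↔ a ≤ b := by
  rw [← sub_nonneg, ← sub_mul, ← mul_sub, hu.star_left_conjugate_nonneg_iff, sub_nonneg]

lemma Matrix.PosSemidef.sqrt_eq_cfcSqrt {A : Mat ι} (hA : A.PosSemidef) :
    hA.sqrt = CFC.sqrt A := by
  rw [CFC.sqrt_eq_cfc, cfc_nnreal_eq_real _ A, hA.1.cfc_eq, Matrix.IsHermitian.cfc,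
    Unitary.conjStarAlgAut_apply, Matrix.PosSemidef.sqrt]
  congr 3 with i
  simp [hA.eigenvalues_nonneg i]

lemma Matrix.PosDef.sqrt_inv_mul_self_mul_sqrt_inv {σ : Mat ι} (hσ : σ.PosDef) :
    (CFC.sqrt σ)⁻¹ * σ * (CFC.sqrt σ)⁻¹ = 1 := by
  have hσS := CFC.sqrt_mul_sqrt_self σ hσ.posSemidef.nonneg
  have hS : IsUnit (CFC.sqrt σ).det := (Matrix.isUnit_iff_isUnit_det _).mp
    (CFC.isUnit_sqrt_iff_isStrictlyPositive.mpr hσ.isStrictlyPositive)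
  set S := CFC.sqrt σ
  rw [← hσS, ← mul_assoc, Matrix.nonsing_inv_mul _ hS, one_mul, Matrix.mul_nonsing_inv _ hS]

lemma Matrix.PosDef.norm_sqrt_inv_mul_mul_sqrt_inv_le_iff {σ A : Mat ι} (hσ : σ.PosDef)
    (hA : A.IsHermitian) {r : ℝ} (hr : 0 ≤ r) :
    ‖(hσ.posSemidef.sqrt)⁻¹ * A * (hσ.posSemidef.sqrt)⁻¹‖ ≤ r ↔
      A ∈ Set.Icc (-((r : ℂ) • σ)) ((r : ℂ) • σ) := by
  rw [hσ.posSemidef.sqrt_eq_cfcSqrt]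
  set T := (CFC.sqrt σ)⁻¹
  have hT : star T = T := by
    rw [Matrix.star_eq_conjTranspose, Matrix.conjTranspose_nonsing_inv,
      ← Matrix.star_eq_conjTranspose, (IsSelfAdjoint.of_nonneg (CFC.sqrt_nonneg σ)).star_eq]
  have hTu : IsUnit T := Matrix.isUnit_nonsing_inv_iff.mpr
    (CFC.isUnit_sqrt_iff_isStrictlyPositive.mpr hσ.isStrictlyPositive)
  have hN : IsSelfAdjoint (T * A * T) := by
    rw [IsSelfAdjoint, star_mul, star_mul, hT, hA.star_eq, mul_assoc]
  have hconj : ∀ c : ℂ, T * (c • σ) * T = c • 1 := fun c => by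
    rw [Matrix.mul_smul, Matrix.smul_mul, hσ.sqrt_inv_mul_self_mul_sqrt_inv]
  rw [hN.norm_le_iff_neg_le_and_le hr, Set.mem_Icc,
    ← hTu.star_left_conjugate_le_conjugate_iff (a := -((r : ℂ) • σ)),
    ← hTu.star_left_conjugate_le_conjugate_iff (b := (r : ℂ) • σ), hT, Matrix.mul_neg,
    Matrix.neg_mul, hconj, Algebra.algebraMap_eq_smul_one, Complex.coe_smul]

lemma tensorId_cqMap {n : ℕ} (B : Fin n → Mat ι) (τ : Type) [Fintype τ] [DecidableEq τ]
    (X : Matrix (Fin n × τ) (Fin n × τ) ℂ) :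
    tensorId (cqMap B) τ X = ∑ i, B i ⊗ₖ X.submatrix (Prod.mk i) (Prod.mk i) := by
  ext p q
  simp [tensorId, cqMap, Matrix.sum_apply, Matrix.kroneckerMap_apply, mul_comm]

lemma isCP_cqMap_iff {n : ℕ} {B : Fin n → Mat ι} :
    IsCP (cqMap B) ↔ ∀ i, (B i).PosSemidef := by
  refine ⟨fun h i => ?_, fun hB l X hX => ?_⟩
  · let v : Fin n × Fin 1 → ℂ := Pi.single (i, 0) 1
    have := (h 1 _ (Matrix.posSemidef_vecMulVec_self_star v)).submatrix (fun a => (a, 0))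
    convert this using 1
    ext a b
    simp [tensorId_cqMap, Matrix.sum_apply, v, Matrix.vecMulVec_apply, Pi.single_apply]
  · rw [tensorId_cqMap]
    exact Matrix.posSemidef_sum _ fun i _ => (hB i).kronecker (hX.submatrix _)

lemma smul_erasure_sub_cqMap {n : ℕ} (σ : Mat ι) (A : Fin n → Mat ι) (c : ℂ) :
    c • erasure (ι := Fin n) σ - cqMap A = cqMap (fun i => c • σ - A i) := by
  ext X : 1
  simp [erasure, cqMap, Matrix.trace, Finset.sum_smul, Finset.smul_sum, smul_sub, smul_smul,
    mul_comm]

lemma smul_erasure_add_cqMap {n : ℕ} (σ : Mat ι) (A : Fin n → Mat ι) (c : ℂ) :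
    c • erasure (ι := Fin n) σ + cqMap A = cqMap (fun i => c • σ + A i) := by
  ext X : 1
  simp [erasure, cqMap, Matrix.trace, Finset.sum_smul, Finset.smul_sum, smul_add, smul_smul,
    Finset.sum_add_distrib, mul_comm]

lemma isCP_smul_erasure_sub_and_add_cqMap_iff {n : ℕ} (σ : Mat ι) (A : Fin n → Mat ι)
    (c : ℂ) :
    (IsCP (c • erasure (ι := Fin n) σ - cqMap A) ∧
      IsCP (c • erasure (ι := Fin n) σ + cqMap A)) ↔
      ∀ i, A i ∈ Set.Icc (-(c • σ)) (c • σ) := by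
  rw [smul_erasure_sub_cqMap, smul_erasure_add_cqMap, isCP_cqMap_iff, isCP_cqMap_iff,
    ← forall_and]
  refine forall_congr' fun i => ?_
  rw [Set.mem_Icc, Matrix.le_iff, Matrix.le_iff, sub_neg_eq_add, add_comm, and_comm]

lemma IsState.exists_posDef_smul_le {σ : Mat ι} (hσ : IsState σ) {r δ : ℝ} (hr : 0 ≤ r)
    (hδ : 0 < δ) :
    ∃ σ' : Mat ι, σ'.PosDef ∧ σ'.trace = 1 ∧ (r : ℂ) • σ ≤ ((r + δ : ℝ) : ℂ) • σ' := by
  have : Nonempty ι := by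
    by_contra! h
    simpa [Matrix.trace] using hσ.2
  set P : Mat ι := (r : ℂ) • σ + ((δ / Fintype.card ι : ℝ) : ℂ) • 1
  have hP : P.PosDef :=
    .posSemidef_add (hσ.1.smul (Complex.zero_le_real.mpr hr))
      (Matrix.PosDef.one.smul (Complex.zero_lt_real.mpr (by positivity)))
  have hrδ : r + δ ≠ 0 := by positivity
  refine ⟨(((r + δ)⁻¹ : ℝ) : ℂ) • P, hP.smul (Complex.zero_lt_real.mpr (by positivity)), ?_, ?_⟩
  · simp only [P, Matrix.trace_smul, Matrix.trace_add, hσ.2, Matrix.trace_one, smul_eq_mul]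
    push_cast
    field_simp
  · rw [smul_smul, ← Complex.ofReal_mul, mul_inv_cancel₀ hrδ, Complex.ofReal_one, one_smul]
    exact le_add_of_nonneg_right (Matrix.PosSemidef.one.smul (by positivity)).nonneg

theorem dualDiamondNorm_cqMap {n k : ℕ} [NeZero n] (A : Fin n → Mat (Fin k))
    (hA : ∀ i, (A i).IsHermitian) :
    dualDiamondNorm (cqMap A) =
      sInf {r : ℝ | ∃ σ : Mat (Fin k), ∃ hσ : σ.PosDef, σ.trace = 1 ∧
        r = Finset.univ.sup' Finset.univ_nonempty
          (fun i => ‖(hσ.posSemidef.sqrt)⁻¹ * A i * (hσ.posSemidef.sqrt)⁻¹‖)} := by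
  refine csInf_eq_csInf_of_forall_exists_le_add ⟨0, fun r hr => hr.1.le⟩
    ⟨0, ?_⟩ ?_ ?_
  · rintro _ ⟨σ, hσ, -, rfl⟩
    exact Finset.le_sup'_of_le _ (Finset.mem_univ (0 : Fin n)) (norm_nonneg _)
  · rintro r ⟨hr, σ, hσ, hcp⟩ δ hδ
    rw [isCP_smul_erasure_sub_and_add_cqMap_iff] at hcp
    obtain ⟨σ', hσ', htr, hle⟩ := hσ.exists_posDef_smul_le hr.le hδ
    refine ⟨_, ⟨σ', hσ', htr, rfl⟩, Finset.sup'_le _ _ fun i _ => ?_⟩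
    rw [hσ'.norm_sqrt_inv_mul_mul_sqrt_inv_le_iff (hA i) (by positivity)]
    exact Set.Icc_subset_Icc (neg_le_neg hle) hle (hcp i)
  · rintro _ ⟨σ, hσ, htr, rfl⟩ ε hε
    set f : Fin n → ℝ := fun i => ‖(hσ.posSemidef.sqrt)⁻¹ * A i * (hσ.posSemidef.sqrt)⁻¹‖
    have hf : ∀ i, f i ≤ Finset.univ.sup' Finset.univ_nonempty f :=
      fun i => Finset.le_sup' f (Finset.mem_univ i)
    have hm := (norm_nonneg _).trans (hf 0)
    refine ⟨_, ⟨by positivity, σ, ⟨hσ.posSemidef, htr⟩, ?_⟩, le_rfl⟩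
    rw [isCP_smul_erasure_sub_and_add_cqMap_iff]
    intro i
    rw [← hσ.norm_sqrt_inv_mul_mul_sqrt_inv_le_iff (hA i) (by positivity)]
    exact le_add_of_le_of_nonneg (hf i) hε.le
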